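/- arXiv:2507.21051 — 9 statements merged into one kernel-verified Lean document; each statement's English description precedes it below -/
import Mathlib

section
/- For every nonsignaling box P, the PR box fraction satisfies 0 ≤ F_PR(P) ≤ 1. -/
/-- A box: `P a b x y` is the probability of outputs `a, b` given inputs `x, y`. -/
abbrev Box := Bool → Bool → Bool → Bool → ℝ

/-- `P` is a (normalized, nonnegative) box. -/
def IsBox (P : Box) : Prop :=
  (∀ a b x y, 0 ≤ P a b x y) ∧
  (∀ x y, P false false x y + P false true x y + P true false x y + P true true x y = 1)

/-- Nonsignaling conditions. -/
def NonSignaling (P : Box) : Prop :=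
  (∀ a x y y', P a false x y + P a true x y = P a false x y' + P a true x y') ∧
  (∀ b y x x', P false b x y + P true b x y = P false b x' y + P true b x' y)

/-- `(-1)^s` for a bit `s`. -/
def sgn (s : Bool) : ℝ := if s then -1 else 1

/-- The deterministic box `D^{αβγε}`: outputs `a = α·x ⊕ β`, `b = γ·y ⊕ ε`. -/
noncomputable def detBox (α β γ ε : Bool) : Box := fun a b x y =>
  if a = xor (α && x) β ∧ b = xor (γ && y) ε then 1 else 0

/-- The PR box `PR^{αβγ}`: uniform on `a ⊕ b = x·y ⊕ α·x ⊕ β·y ⊕ γ`. -/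
noncomputable def prBox (α β γ : Bool) : Box := fun a b x y =>
  if xor a b = xor (x && y) (xor (α && x) (xor (β && y) γ)) then 1/2 else 0

/-- The maximally mixed box `P_N`. -/
noncomputable def mmBox : Box := fun _ _ _ _ => 1/4

/-- Bell-local boxes: convex combinations of the 16 deterministic boxes. -/
def IsBellLocal (P : Box) : Prop :=
  ∃ q : Bool → Bool → Bool → Bool → ℝ,
    (∀ α β γ ε, 0 ≤ q α β γ ε) ∧
    (∑ α, ∑ β, ∑ γ, ∑ ε, q α β γ ε) = 1 ∧
    ∀ a b x y, P a b x y = ∑ α, ∑ β, ∑ γ, ∑ ε, q α β γ ε * detBox α β γ ε a b x y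

/-- The correlator `⟨A_x B_y⟩ = Σ_{a,b} (-1)^{a⊕b} P(ab|A_x B_y)`. -/
def corr (P : Box) (x y : Bool) : ℝ :=
  P false false x y - P false true x y - P true false x y + P true true x y

/-- The CHSH expression `B_{αβγ}(P)`. -/
def chsh (α β γ : Bool) (P : Box) : ℝ :=
  sgn γ * corr P false false + sgn (xor β γ) * corr P false true +
  sgn (xor α γ) * corr P true false + sgn (xor α (xor β (xor γ true))) * corr P true true

/-- The marginal `⟨A_x⟩ = Σ_{a,b} (-1)^a P(ab|A_x B_y)` (computed at `y = false`). -/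
def margA (P : Box) (x : Bool) : ℝ :=
  P false false x false + P false true x false - P true false x false - P true true x false

/-- The marginal `⟨B_y⟩ = Σ_{a,b} (-1)^b P(ab|A_x B_y)` (computed at `x = false`). -/
def margB (P : Box) (y : Bool) : ℝ :=
  P false false false y - P false true false y + P true false false y - P true true false y

/-- The covariance `cov(A_x, B_y) = ⟨A_x B_y⟩ − ⟨A_x⟩⟨B_y⟩`. -/
def cov (P : Box) (x y : Bool) : ℝ := corr P x y - margA P x * margB P y

/-- The absolute covariance CHSH function `covB_{2α+β}`. -/
def covB (P : Box) (α β : Bool) : ℝ :=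
  |cov P false false + sgn β * cov P false true + sgn α * cov P true false +
    sgn (xor α (xor β true)) * cov P true true|

/-- `Γ₁ = ||covB₀ − covB₁| − |covB₂ − covB₃||`. -/
def Gamma1 (P : Box) : ℝ :=
  |(|covB P false false - covB P false true| - |covB P true false - covB P true true|)|

/-- `Γ₂ = ||covB₀ − covB₂| − |covB₁ − covB₃||`. -/
def Gamma2 (P : Box) : ℝ :=
  |(|covB P false false - covB P true false| - |covB P false true - covB P true true|)|

/-- `Γ₃ = ||covB₀ − covB₃| − |covB₁ − covB₂||`. -/
def Gamma3 (P : Box) : ℝ :=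
  |(|covB P false false - covB P true true| - |covB P false true - covB P true false|)|

/-- The PR box fraction `F_PR(P) = (1/4) min{Γ₁, Γ₂, Γ₃}`. -/
noncomputable def FPR (P : Box) : ℝ := (1/4) * min (Gamma1 P) (min (Gamma2 P) (Gamma3 P))

/-- A conditional probability distribution `Q a x` of output `a` given input `x`. -/
def IsCondDist (Q : Bool → Bool → ℝ) : Prop :=
  (∀ a x, 0 ≤ Q a x) ∧ ∀ x, Q false x + Q true x = 1

lemma abs_cov_le_one (P : Box) (hbox : IsBox P) (hns : NonSignaling P) (x y : Bool) :
    |cov P x y| ≤ 1 := by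
  obtain ⟨hpos, hsum⟩ := hbox
  obtain ⟨hA, hB⟩ := hns
  have hmA : margA P x
      = P false false x y + P false true x y - P true false x y - P true true x y := by
    unfold margA
    have h1 := hA false x false y
    have h2 := hA true x false y
    linarith
  have hmB : margB P y
      = P false false x y - P false true x y + P true false x y - P true true x y := by
    unfold margB
    have h1 := hB false y false x
    have h2 := hB true y false x
    linarith
  rw [abs_le]
  unfold cov corr
  rw [hmA, hmB]
  have h := hsum x y
  have p00 := hpos false false x y
  have p01 := hpos false true x y
  have p10 := hpos true false x y
  have p11 := hpos true true x y
  constructor <;>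
    nlinarith [sq_nonneg (P false false x y - P true true x y),
      sq_nonneg (P false true x y - P true false x y),
      sq_nonneg (P false false x y + P true true x y),
      sq_nonneg (P false true x y + P true false x y),
      mul_nonneg p00 p11, mul_nonneg p01 p10]

lemma gamma_aux {u v u' v' : ℝ} (h : |u - v| ≤ 4) (h' : |u' - v'| ≤ 4) :
    |(|(|u| - |v|)| - |(|u'| - |v'|)|)| ≤ 4 := by
  have a1 : |(|u| - |v|)| ≤ 4 := le_trans (abs_abs_sub_abs_le_abs_sub u v) h
  have a2 : |(|u'| - |v'|)| ≤ 4 := le_trans (abs_abs_sub_abs_le_abs_sub u' v') h'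
  have b1 : (0:ℝ) ≤ |(|u| - |v|)| := abs_nonneg _
  have b2 : (0:ℝ) ≤ |(|u'| - |v'|)| := abs_nonneg _
  rw [abs_sub_le_iff]
  constructor <;> linarith

/-- for every nonsignaling box, `0 ≤ F_PR(P) ≤ 1`. -/
theorem FPR_mem_unit_interval (P : Box) (hbox : IsBox P) (hns : NonSignaling P) :
    0 ≤ FPR P ∧ FPR P ≤ 1 := by
  have hc : ∀ x y, |cov P x y| ≤ 1 := abs_cov_le_one P hbox hns
  have h00 := hc false false
  have h01 := hc false true
  have h10 := hc true false
  have h11 := hc true true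
  rw [abs_le] at h00 h01 h10 h11
  constructor
  · apply mul_nonneg (by norm_num)
    exact le_min (abs_nonneg _) (le_min (abs_nonneg _) (abs_nonneg _))
  · have hΓ1 : Gamma1 P ≤ 4 := by
      unfold Gamma1 covB
      simp only [sgn, Bool.xor_true, Bool.xor_false, Bool.not_true, Bool.not_false,
        if_true, if_false]
      apply gamma_aux <;> rw [abs_le] <;> constructor <;> norm_num <;> linarith
    have hmin : min (Gamma1 P) (min (Gamma2 P) (Gamma3 P)) ≤ 4 :=
      le_trans (min_le_left _ _) hΓ1
    unfold FPR
    linarith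
end

section
/- F_PR is invariant under relabeling of inputs and/or outputs: for any nonsignaling box P and any s,t,u,v,w,z ∈ {0,1}, the box P' defined by P'(ab|A_xB_y) = P((a ⊕ u·x ⊕ v)(b ⊕ w·y ⊕ z)|A_{x⊕s}B_{y⊕t}) is a nonsignaling box and F_PR(P') = F_PR(P). -/

def relabel (P : Box) (s t u v w z : Bool) : Box := fun a b x y =>
  P (xor a (xor (u && x) v)) (xor b (xor (w && y) z)) (xor x s) (xor y t)

lemma corr_relabel (P : Box) (s t u v w z x y : Bool) :
    corr (relabel P s t u v w z) x y =
      sgn (u && x) * sgn (w && y) * sgn v * sgn z * corr P (xor x s) (xor y t) := by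
  cases u <;> cases v <;> cases w <;> cases z <;> cases x <;> cases y <;>
    simp [corr, relabel, sgn] <;> ring
lemma margA_relabel (P : Box) (hns : NonSignaling P) (s t u v w z x : Bool) :
    margA (relabel P s t u v w z) x = sgn (u && x) * sgn v * margA P (xor x s) := by
  have key : ∀ a x', P a false x' t + P a true x' t = P a false x' false + P a true x' false :=
    fun a x' => hns.1 a x' t false
  cases u <;> cases v <;> cases z <;> cases x <;> cases s <;>
    simp [margA, relabel, sgn] <;>
    linarith [key false false, key false true, key true false, key true true]

lemma margB_relabel (P : Box) (hns : NonSignaling P) (s t u v w z y : Bool) :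
    margB (relabel P s t u v w z) y = sgn (w && y) * sgn z * margB P (xor y t) := by
  have key : ∀ b y', P false b s y' + P true b s y' = P false b false y' + P true b false y' :=
    fun b y' => hns.2 b y' s false
  cases w <;> cases z <;> cases v <;> cases y <;> cases t <;>
    simp [margB, relabel, sgn] <;>
    linarith [key false false, key false true, key true false, key true true]
lemma cov_relabel (P : Box) (hns : NonSignaling P) (s t u v w z x y : Bool) :
    cov (relabel P s t u v w z) x y =
      sgn (u && x) * sgn (w && y) * sgn v * sgn z * cov P (xor x s) (xor y t) := by
  rw [cov, cov, corr_relabel, margA_relabel P hns, margB_relabel P hns]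
  cases u <;> cases v <;> cases w <;> cases z <;> cases x <;> cases y <;> simp [sgn] <;> ring

lemma sgn_false : sgn false = 1 := rfl
lemma sgn_true : sgn true = -1 := rfl

set_option maxHeartbeats 2000000 in
lemma covB_relabel (P : Box) (hns : NonSignaling P) (s t u v w z α β : Bool) :
    covB (relabel P s t u v w z) α β = covB P (xor α (xor t u)) (xor β (xor s w)) := by
  simp only [covB, cov_relabel P hns]
  cases α <;> cases β <;> cases s <;> cases t <;> cases u <;> cases v <;> cases w <;> cases z <;>
    simp only [sgn_false, sgn_true, Bool.and_self, Bool.and_false, Bool.and_true, Bool.false_and,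
      Bool.true_and, Bool.xor_false, Bool.xor_true, Bool.false_xor, Bool.true_xor,
      Bool.not_false, Bool.not_true] <;>
    first
      | (congr 1; ring1)
      | (rw [← abs_neg]; congr 1; ring1)
lemma Gamma1_relabel (P : Box) (hns : NonSignaling P) (s t u v w z : Bool) :
    Gamma1 (relabel P s t u v w z) = Gamma1 P := by
  simp only [Gamma1, covB_relabel P hns]
  cases t <;> cases u <;> cases s <;> cases w <;>
    simp only [Bool.xor_false, Bool.xor_true, Bool.false_xor, Bool.true_xor,
      Bool.not_false, Bool.not_true] <;>
    simp [abs_sub_comm]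

lemma Gamma2_relabel (P : Box) (hns : NonSignaling P) (s t u v w z : Bool) :
    Gamma2 (relabel P s t u v w z) = Gamma2 P := by
  simp only [Gamma2, covB_relabel P hns]
  cases t <;> cases u <;> cases s <;> cases w <;>
    simp only [Bool.xor_false, Bool.xor_true, Bool.false_xor, Bool.true_xor,
      Bool.not_false, Bool.not_true] <;>
    simp [abs_sub_comm]

lemma Gamma3_relabel (P : Box) (hns : NonSignaling P) (s t u v w z : Bool) :
    Gamma3 (relabel P s t u v w z) = Gamma3 P := by
  simp only [Gamma3, covB_relabel P hns]
  cases t <;> cases u <;> cases s <;> cases w <;>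
    simp only [Bool.xor_false, Bool.xor_true, Bool.false_xor, Bool.true_xor,
      Bool.not_false, Bool.not_true] <;>
    simp [abs_sub_comm]

lemma FPR_relabel (P : Box) (hns : NonSignaling P) (s t u v w z : Bool) :
    FPR (relabel P s t u v w z) = FPR P := by
  rw [FPR, FPR, Gamma1_relabel P hns, Gamma2_relabel P hns, Gamma3_relabel P hns]
set_option maxHeartbeats 1000000 in
lemma isBox_relabel (P : Box) (hbox : IsBox P) (s t u v w z : Bool) :
    IsBox (relabel P s t u v w z) := by
  constructor
  · intro a b x y; exact hbox.1 _ _ _ _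
  · intro x y
    have h := hbox.2 (xor x s) (xor y t)
    cases u <;> cases v <;> cases w <;> cases z <;> cases x <;> cases y <;>
      simp only [relabel, Bool.and_self, Bool.and_false, Bool.and_true, Bool.false_and,
        Bool.true_and, Bool.xor_false, Bool.xor_true, Bool.false_xor, Bool.true_xor,
        Bool.not_false, Bool.not_true] <;>
      simp only [Bool.xor_false, Bool.xor_true, Bool.false_xor, Bool.true_xor,
        Bool.not_false, Bool.not_true] at h <;>
      linarith

set_option maxHeartbeats 2000000 in
lemma ns_relabel (P : Box) (hns : NonSignaling P) (s t u v w z : Bool) :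
    NonSignaling (relabel P s t u v w z) := by
  constructor
  · intro a x y y'
    have h1 := hns.1 (xor a (xor (u && x) v)) (xor x s) (xor y t) (xor y' t)
    cases w <;> cases z <;> cases y <;> cases y' <;>
      simp only [relabel, Bool.and_self, Bool.and_false, Bool.and_true, Bool.false_and,
        Bool.true_and, Bool.xor_false, Bool.xor_true, Bool.false_xor, Bool.true_xor,
        Bool.not_false, Bool.not_true] at h1 ⊢ <;>
      linarith
  · intro b y x x'
    have h2 := hns.2 (xor b (xor (w && y) z)) (xor y t) (xor x s) (xor x' s)
    cases u <;> cases v <;> cases x <;> cases x' <;>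
      simp only [relabel, Bool.and_self, Bool.and_false, Bool.and_true, Bool.false_and,
        Bool.true_and, Bool.xor_false, Bool.xor_true, Bool.false_xor, Bool.true_xor,
        Bool.not_false, Bool.not_true] at h2 ⊢ <;>
      linarith

/-- `F_PR` is invariant under relabeling of inputs and/or outputs. -/
theorem FPR_relabel_invariant (P : Box) (hbox : IsBox P) (hns : NonSignaling P)
    (s t u v w z : Bool) :
    IsBox (fun a b x y =>
        P (xor a (xor (u && x) v)) (xor b (xor (w && y) z)) (xor x s) (xor y t)) ∧
    NonSignaling (fun a b x y =>
        P (xor a (xor (u && x) v)) (xor b (xor (w && y) z)) (xor x s) (xor y t)) ∧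
    FPR (fun a b x y =>
        P (xor a (xor (u && x) v)) (xor b (xor (w && y) z)) (xor x s) (xor y t)) = FPR P := by
  exact ⟨isBox_relabel P hbox s t u v w z, ns_relabel P hns s t u v w z,
    FPR_relabel P hns s t u v w z⟩
end

section
/- Let 0 ≤ c₀, c₁ ≤ 1 and set P = c₀·PR + (1−c₀)·(c₁·D^{0000} + (1−c₁)·D^{0101}). Then the PR box fraction of P equals c₀: F_PR(P) = c₀. In particular, for this family of boxes F_PR(P) > 0 if and only if P is Bell nonlocal (i.e., B_{000}(P) > 2). -/
/-- for `P = c₀·PR + (1−c₀)·(c₁·D^{0000} + (1−c₁)·D^{0101})`,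
`F_PR(P) = c₀`, and `F_PR(P) > 0` iff `P` is Bell nonlocal. -/
theorem FPR_postquantum_family (c₀ c₁ : ℝ)
    (h00 : 0 ≤ c₀) (h01 : c₀ ≤ 1) (h10 : 0 ≤ c₁) (h11 : c₁ ≤ 1)
    (P : Box)
    (hP : ∀ a b x y, P a b x y =
      c₀ * prBox false false false a b x y +
      (1 - c₀) * (c₁ * detBox false false false false a b x y +
        (1 - c₁) * detBox false true false true a b x y)) :
    FPR P = c₀ ∧ (FPR P > 0 ↔ chsh false false false P > 2) := by
  set m : ℝ := (1 - c₀) - ((1 - c₀) * (2 * c₁ - 1))^2 with hm_def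
  have hm : 0 ≤ m := by
    have h1 : ((1 - c₀) * (2 * c₁ - 1))^2 = (1-c₀)^2 * (2*c₁-1)^2 := by ring
    have h2 : (2*c₁-1)^2 ≤ 1 := by nlinarith
    have h3 : (1-c₀)^2 ≤ (1-c₀) := by nlinarith
    nlinarith [sq_nonneg (2*c₁-1), sq_nonneg (1-c₀)]
  have hc00 : cov P false false = c₀ + m := by
    simp only [cov, corr, margA, margB, hP, prBox, detBox]
    norm_num; ring
  have hc01 : cov P false true = c₀ + m := by
    simp only [cov, corr, margA, margB, hP, prBox, detBox]
    norm_num; ring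
  have hc10 : cov P true false = c₀ + m := by
    simp only [cov, corr, margA, margB, hP, prBox, detBox]
    norm_num; ring
  have hc11 : cov P true true = -c₀ + m := by
    simp only [cov, corr, margA, margB, hP, prBox, detBox]
    norm_num; ring
  have hB00 : covB P false false = 4*c₀ + 2*m := by
    simp only [covB, sgn, hc00, hc01, hc10, hc11]
    norm_num
    rw [abs_eq (by linarith : (0:ℝ) ≤ 4*c₀ + 2*m)]; left; ring
  have hB01 : covB P false true = 2*m := by
    simp only [covB, sgn, hc00, hc01, hc10, hc11]
    norm_num
    rw [abs_eq (by linarith : (0:ℝ) ≤ 2*m)]; left; ring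
  have hB10 : covB P true false = 2*m := by
    simp only [covB, sgn, hc00, hc01, hc10, hc11]
    norm_num
    rw [abs_eq (by linarith : (0:ℝ) ≤ 2*m)]; left; ring
  have hB11 : covB P true true = 2*m := by
    simp only [covB, sgn, hc00, hc01, hc10, hc11]
    norm_num
    rw [abs_eq (by linarith : (0:ℝ) ≤ 2*m)]; right; ring
  have hG1 : Gamma1 P = 4*c₀ := by
    simp only [Gamma1, hB00, hB01, hB10, hB11]
    rw [show 4*c₀ + 2*m - 2*m = 4*c₀ by ring, show 2*m - 2*m = (0:ℝ) by ring,
      abs_zero, sub_zero, abs_abs, abs_of_nonneg (show (0:ℝ) ≤ 4*c₀ by linarith)]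
  have hG2 : Gamma2 P = 4*c₀ := by
    simp only [Gamma2, hB00, hB01, hB10, hB11]
    rw [show 4*c₀ + 2*m - 2*m = 4*c₀ by ring, show 2*m - 2*m = (0:ℝ) by ring,
      abs_zero, sub_zero, abs_abs, abs_of_nonneg (show (0:ℝ) ≤ 4*c₀ by linarith)]
  have hG3 : Gamma3 P = 4*c₀ := by
    simp only [Gamma3, hB00, hB01, hB10, hB11]
    rw [show 4*c₀ + 2*m - 2*m = 4*c₀ by ring, show 2*m - 2*m = (0:ℝ) by ring,
      abs_zero, sub_zero, abs_abs, abs_of_nonneg (show (0:ℝ) ≤ 4*c₀ by linarith)]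
  have hF : FPR P = c₀ := by
    simp only [FPR, hG1, hG2, hG3, min_self]; ring
  have hchsh : chsh false false false P = 2 + 2*c₀ := by
    simp only [chsh, corr, sgn, hP, prBox, detBox]
    norm_num
    ring
  refine ⟨hF, ?_⟩
  rw [hF, hchsh]
  constructor <;> intro h <;> linarith
end

section
/- Every nonsignaling box P satisfying the Hardy conditions P(01|A_0B_0) = P(10|A_0B_1) = P(10|A_1B_0) = 0 is a convex combination of the PR box PR^{000} and the five deterministic boxes D^{0000}, D^{0010}, D^{0101}, D^{1101}, D^{1110}: there exist nonnegative reals h_PR, h₀, h₁, h₂, h₃, h₄ summing to 1 such that P = h_PR·PR^{000} + h₀·D^{0000} + h₁·D^{0010} + h₂·D^{0101} + h₃·D^{1101} + h₄·D^{1110}. -/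
/-- every nonsignaling box satisfying the Hardy conditions is a convex
combination of `PR^{000}`, `D^{0000}`, `D^{0010}`, `D^{0101}`, `D^{1101}`, `D^{1110}`. -/
theorem hardy_nonsignaling_decomposition (P : Box) (hbox : IsBox P) (hns : NonSignaling P)
    (hH1 : P false true false false = 0)
    (hH2 : P true false false true = 0)
    (hH3 : P true false true false = 0) :
    ∃ hPR h₀ h₁ h₂ h₃ h₄ : ℝ,
      0 ≤ hPR ∧ 0 ≤ h₀ ∧ 0 ≤ h₁ ∧ 0 ≤ h₂ ∧ 0 ≤ h₃ ∧ 0 ≤ h₄ ∧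
      hPR + h₀ + h₁ + h₂ + h₃ + h₄ = 1 ∧
      ∀ a b x y, P a b x y =
        hPR * prBox false false false a b x y +
        h₀ * detBox false false false false a b x y +
        h₁ * detBox false false true false a b x y +
        h₂ * detBox false true false true a b x y +
        h₃ * detBox true true false true a b x y +
        h₄ * detBox true true true false a b x y := by
  obtain ⟨hpos, hnorm⟩ := hbox
  obtain ⟨hA, hB⟩ := hns
  have N00 := hnorm false false
  have N01 := hnorm false true
  have N10 := hnorm true false
  have N11 := hnorm true true
  have A00 := hA false false false true
  have A10 := hA true false false true
  have A01 := hA false true false true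
  have A11 := hA true true false true
  have B00 := hB false false false true
  have B10 := hB true false false true
  have B01 := hB false true false true
  have B11 := hB true true false true
  refine ⟨2 * P true false true true, P false false true true, P false true false true,
    P true true true true, P false true true false, P true false false false,
    by linarith [hpos true false true true], hpos _ _ _ _, hpos _ _ _ _, hpos _ _ _ _,
    hpos _ _ _ _, hpos _ _ _ _, by linarith, ?_⟩
  intro a b x y
  cases a <;> cases b <;> cases x <;> cases y <;>
    simp [prBox, detBox] <;> linarith
end

section
/- If a Bell-local box P (a convex combination of the 16 deterministic boxes) satisfies the Hardy conditions P(01|A_0B_0) = P(10|A_0B_1) = P(10|A_1B_0) = 0, then its Hardy success probability vanishes: p_H(P) = P(10|A_1B_1) = 0. -/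
/-- a Bell-local box satisfying the Hardy conditions has `p_H = 0`. -/
theorem bellLocal_hardy_success_zero (P : Box) (hP : IsBellLocal P)
    (hH1 : P false true false false = 0)
    (hH2 : P true false false true = 0)
    (hH3 : P true false true false = 0) :
    P true false true true = 0 := by
  obtain ⟨q, hq0, -, hrep⟩ := hP
  have e1 := hrep false true false false
  have e2 := hrep true false false true
  have e3 := hrep true false true false
  have e4 := hrep true false true true
  rw [hH1] at e1; rw [hH2] at e2; rw [hH3] at e3
  simp only [Fintype.sum_bool, detBox] at e1 e2 e3 e4
  norm_num at e1 e2 e3 e4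
  have h := fun α β γ ε => hq0 α β γ ε
  linarith [hq0 true true true true, hq0 true true true false, hq0 true true false true,
    hq0 true true false false, hq0 true false true true, hq0 true false true false,
    hq0 true false false true, hq0 true false false false, hq0 false true true true,
    hq0 false true true false, hq0 false true false true, hq0 false true false false,
    hq0 false false true true, hq0 false false true false, hq0 false false false true,
    hq0 false false false false]
end

section
/- Hardy's paradox implies CHSH violation: if a nonsignaling box P satisfies the Hardy conditions P(01|A_0B_0) = P(10|A_0B_1) = P(10|A_1B_0) = 0 and has Hardy success probability p_H(P) = P(10|A_1B_1) > 0, then P violates the CHSH inequality B_{000} ≤ 2, i.e., B_{000}(P) > 2. -/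
/-- Hardy's paradox implies CHSH violation. -/
theorem hardy_implies_chsh_violation (P : Box) (hbox : IsBox P) (hns : NonSignaling P)
    (hH1 : P false true false false = 0)
    (hH2 : P true false false true = 0)
    (hH3 : P true false true false = 0)
    (hpos : P true false true true > 0) :
    chsh false false false P > 2 := by
  obtain ⟨hpos', hnorm⟩ := hbox
  obtain ⟨hnsA, hnsB⟩ := hns
  have e1 := hnsA true true false true
  have e2 := hnsB true true false true
  have e3 := hnsA true false false true
  have e4 := hnsB true false false true
  have n00 := hnorm false false
  have n01 := hnorm false true
  have n10 := hnorm true false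
  have n11 := hnorm true true
  simp only [chsh, corr, sgn, Bool.xor_false, Bool.xor_true, Bool.not_false,
    if_true, if_false] at *
  norm_num
  linarith
end

section
/- Among nonsignaling boxes, the maximal Hardy success probability is 1/2 and is attained by the PR box: every nonsignaling box P satisfying the Hardy conditions P(01|A_0B_0) = P(10|A_0B_1) = P(10|A_1B_0) = 0 has p_H(P) = P(10|A_1B_1) ≤ 1/2, and PR^{000} satisfies the Hardy conditions with p_H(PR^{000}) = 1/2. -/
/-- the maximal nonsignaling Hardy success probability is `1/2`,
attained by the PR box. -/
theorem hardy_max_success :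
    (∀ P : Box, IsBox P → NonSignaling P →
      P false true false false = 0 → P true false false true = 0 →
      P true false true false = 0 → P true false true true ≤ 1/2) ∧
    (prBox false false false false true false false = 0 ∧
     prBox false false false true false false true = 0 ∧
     prBox false false false true false true false = 0) ∧
    prBox false false false true false true true = 1/2 := by
  refine ⟨?_, ⟨?_, ?_, ?_⟩, ?_⟩
  · intro P hB hNS h1 h2 h3
    obtain ⟨hpos, hnorm⟩ := hB
    obtain ⟨hA, hBs⟩ := hNS
    have n00 := hnorm false false
    have n01 := hnorm false true
    have n10 := hnorm true false
    have n11 := hnorm true true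
    have a1 := hA true true false true
    have a0 := hA false true false true
    have b1 := hBs true true false true
    have b0 := hBs false true false true
    have a1' := hA true false false true
    have b1' := hBs true false false true
    have p1 := hpos false false true true
    have p2 := hpos false true true true
    have p3 := hpos true true true true
    have p4 := hpos false false false false
    have p5 := hpos true false false false
    have p6 := hpos true true false false
    have p7 := hpos false false true false
    have p8 := hpos false true true false
    have p9 := hpos true true true false
    have p10 := hpos false false false true
    have p11 := hpos false true false true
    have p12 := hpos true true false true
    linarith
  · simp [prBox]
  · simp [prBox]
  · simp [prBox]
  · simp [prBox]
end

section
/- The isotropic PR box exhibits the PR box fraction without Bell nonlocality: for 0 ≤ ε ≤ 1, the box P = ε·PR + (1−ε)·P_N satisfies B_{000}(P) = 4ε and F_PR(P) = ε; moreover, for 0 ≤ ε ≤ 1/2 the box P is Bell-local (a convex combination of the 16 deterministic boxes), so for 0 < ε ≤ 1/2 one has a Bell-local box with F_PR(P) = ε > 0. -/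
/-- the isotropic PR box `P = ε·PR + (1−ε)·P_N` has `B_{000}(P) = 4ε`,
`F_PR(P) = ε`, and is Bell-local for `ε ≤ 1/2`. -/
theorem isotropic_PR_box (epsilon : ℝ) (h0 : 0 ≤ epsilon) (h1 : epsilon ≤ 1) (P : Box)
    (hP : ∀ a b x y, P a b x y =
      epsilon * prBox false false false a b x y + (1 - epsilon) * mmBox a b x y) :
    chsh false false false P = 4 * epsilon ∧
    FPR P = epsilon ∧
    (epsilon ≤ 1/2 → IsBellLocal P) := by
  have hcorr : ∀ x y, corr P x y = if (x && y) then -epsilon else epsilon := by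
    intro x y
    cases x <;> cases y <;> simp [corr, hP, prBox, mmBox] <;> ring
  have hmA : ∀ x, margA P x = 0 := by
    intro x
    cases x <;> simp [margA, hP, prBox, mmBox] <;> ring
  have hmB : ∀ y, margB P y = 0 := by
    intro y
    cases y <;> simp [margB, hP, prBox, mmBox] <;> ring
  have hcov : ∀ x y, cov P x y = if (x && y) then -epsilon else epsilon := by
    intro x y; simp [cov, hcorr, hmA, hmB]
  have h4 : (0:ℝ) ≤ 4 * epsilon := by linarith
  have hcB00 : covB P false false = 4 * epsilon := by
    simp only [covB, hcov, sgn]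
    norm_num
    rw [show epsilon + epsilon + epsilon + epsilon = 4 * epsilon by ring, abs_of_nonneg h4]
  have hcB01 : covB P false true = 0 := by
    simp only [covB, hcov, sgn]
    norm_num
  have hcB10 : covB P true false = 0 := by
    simp only [covB, hcov, sgn]
    norm_num
  have hcB11 : covB P true true = 0 := by
    simp only [covB, hcov, sgn]
    norm_num
  have hG1 : Gamma1 P = 4 * epsilon := by
    simp [Gamma1, hcB00, hcB01, hcB10, hcB11, abs_of_nonneg h4]
  have hG2 : Gamma2 P = 4 * epsilon := by
    simp [Gamma2, hcB00, hcB01, hcB10, hcB11, abs_of_nonneg h4]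
  have hG3 : Gamma3 P = 4 * epsilon := by
    simp [Gamma3, hcB00, hcB01, hcB10, hcB11, abs_of_nonneg h4]
  refine ⟨?_, ?_, ?_⟩
  · simp only [chsh, hcorr, sgn]; norm_num; ring
  · simp only [FPR, hG1, hG2, hG3, min_self]; ring
  · intro hhalf
    refine ⟨fun α β γ δ => (1 - 2*epsilon)/16 + if xor β δ = (α && γ) then epsilon/4 else 0,
      ?_, ?_, ?_⟩
    · intro α β γ δ
      have : (0:ℝ) ≤ (1 - 2*epsilon)/16 := by linarith
      dsimp only
      split <;> [linarith; linarith]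
    · simp [Fintype.sum_bool]
      ring
    · intro a b x y
      rw [hP]
      cases a <;> cases b <;> cases x <;> cases y <;>
        simp [detBox, prBox, mmBox, Fintype.sum_bool] <;> ring
end

section
/- For 0 ≤ ν ≤ 1: the PR-box noise terms carry a nonzero PR box fraction while the deterministic noise term does not, namely F_PR(ν·PR^{αβγ} + (1−ν)·P_N) = ν for every α,β,γ ∈ {0,1} (in particular for PR^{100} and PR^{111}), whereas F_PR(ν·D^{0000} + (1−ν)·P_N) = 0. -/
set_option maxHeartbeats 2000000 in
/-- PR-box noise carries PR box fraction `ν`, deterministic noise carries none. -/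
theorem noise_FPR (nu : ℝ) (h0 : 0 ≤ nu) (h1 : nu ≤ 1) :
    (∀ α β γ : Bool,
      FPR (fun a b x y => nu * prBox α β γ a b x y + (1 - nu) * mmBox a b x y) = nu) ∧
    FPR (fun a b x y =>
      nu * detBox false false false false a b x y + (1 - nu) * mmBox a b x y) = 0 := by

  constructor
  · intro α β γ
    have h4 : |nu * 4| = nu * 4 := abs_of_nonneg (by linarith)
    cases α <;> cases β <;> cases γ <;>
    · simp only [FPR, Gamma1, Gamma2, Gamma3, covB, cov, corr, margA, margB,
        prBox, mmBox, sgn]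
      norm_num
      ring_nf
      simp [h4]
      try linarith
  · simp only [FPR, Gamma1, Gamma2, Gamma3, covB, cov, corr, margA, margB,
      detBox, mmBox, sgn]
    norm_num
    ring_nf
    simp
    rw [show -(nu*2) + nu^2*2 = -(nu*2 - nu^2*2) by ring, abs_neg, sub_self]
end
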